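/- Let α = ∛2 and β a real root of X² + α²X + (1 - α²). If c₃, c₄, c₅, c₆ ∈ ℚ satisfy that c₃·u₃ + c₄·u₄ + c₅·u₅ + c₆·u₆ has all coordinates rational, where u₃,…,u₆ are the vectors in ℝ¹⁰ defined in the paper (Section 3.1), then c₃ = c₄ = c₅ = c₆ = 0. -/

import Mathlib

/-!
Since `X³ - 2` is irreducible over `ℚ`, the numbers `1, α, α²` are linearly independent over `ℚ`.
The 0-th coordinate of the combination is `2 c₅ β` plus an element of `ℚ(α)`, so its rationality
and `β ∉ ℚ(α)` force `c₅ = 0`; independence then gives `c₄ = 0` and `c₆ = -c₃`. The 4-th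
coordinate becomes `2 c₃ (α - 4) / (4α² - 2)`, and clearing the denominator, independence once
more gives `c₃ = 0`.
-/

open Polynomial IntermediateField

lemma rat_pow_three_ne_two (b : ℚ) : b ^ 3 ≠ 2 := by
  intro hb
  have hv := congrArg (padicValRat 2) hb
  rw [padicValRat.pow, show (2 : ℚ) = (2 : ℕ) by norm_num, padicValRat.self one_lt_two] at hv
  omega

lemma minpoly_eq_X_pow_three_sub_two {L : Type*} [Field L] [Algebra ℚ L] {α : L}
    (hα : α ^ 3 = 2) : minpoly ℚ α = X ^ 3 - C 2 :=
  (minpoly.eq_of_irreducible_of_monic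
    (X_pow_sub_C_irreducible_of_prime Nat.prime_three rat_pow_three_ne_two)
    (by simp [hα]) (monic_X_pow_sub_C _ three_ne_zero)).symm

lemma minpoly.eq_zero_of_add_mul_add_mul_sq_eq_zero {K L : Type*} [Field K] [Field L]
    [Algebra K L] {α : L} (hα : (minpoly K α).degree = 3) {a b c : K}
    (h : algebraMap K L a + algebraMap K L b * α + algebraMap K L c * α ^ 2 = 0) :
    a = 0 ∧ b = 0 ∧ c = 0 := by
  set p : K[X] := C a + C b * X + C c * X ^ 2
  have hp : p = 0 := by
    by_contra hp
    have hdeg := minpoly.degree_le_of_ne_zero K α hp (by simpa [p] using h)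
    have hp2 : p.degree ≤ 2 := by simp only [p]; compute_degree
    rw [hα] at hdeg
    exact absurd (hdeg.trans hp2) (by decide)
  refine ⟨?_, ?_, ?_⟩
  · simpa [p] using congrArg (coeff · 0) hp
  · simpa [p] using congrArg (coeff · 1) hp
  · simpa [p] using congrArg (coeff · 2) hp

lemma eq_zero_of_add_mul_add_mul_sq_eq_zero_of_pow_three_eq_two {L : Type*} [Field L]
    [CharZero L] {α : L} (hα : α ^ 3 = 2) {a b c : ℚ} (h : (a : L) + b * α + c * α ^ 2 = 0) :
    a = 0 ∧ b = 0 ∧ c = 0 :=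
  minpoly.eq_zero_of_add_mul_add_mul_sq_eq_zero
    (by rw [minpoly_eq_X_pow_three_sub_two hα, degree_X_pow_sub_C three_pos]; rfl)
    (by simpa only [eq_ratCast] using h)

lemma IntermediateField.mem_of_smul_add_mem {K L : Type*} [Field K] [Field L] [Algebra K L]
    {F : IntermediateField K L} {c : K} (hc : c ≠ 0) {x y : L} (hy : y ∈ F)
    (h : c • x + y ∈ F) : x ∈ F := by
  simpa only [add_sub_cancel_right, inv_smul_smul₀ hc] using F.smul_mem (sub_mem h hy) (x := c⁻¹)

theorem rational_combination_trivial_general (α β : ℝ) (hα : α ^ 3 = 2)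
    (hβα : β ∉ IntermediateField.adjoin ℚ ({α} : Set ℝ))
    (c₃ c₄ c₅ c₆ : ℚ)
    (h : ∀ i : Fin 10, ∃ q : ℚ,
      (c₃ : ℝ) * (![-α + 2, 0, 0, 0, (α - 4)/(4*α^2 - 2), 0, 0, 0, 0, 1] i)
      + (c₄ : ℝ) * (![-2*α^2 + 1, 0, 0, 0, 1/2, 0, 0, 0, 1, 0] i)
      + (c₅ : ℝ) * (![α^2 + 2*α + 2*β + 2, 0, 0, 0,
            (α^2 - 4*α)/(4*α^2 - 2), 0, 1, 0, 0, 0] i)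
      + (c₆ : ℝ) * (![-α + 2, 0, 0, 0, (-α + 4)/(4*α^2 - 2), 1, 0, 0, 0, 0] i)
      = (q : ℝ)) :
    c₃ = 0 ∧ c₄ = 0 ∧ c₅ = 0 ∧ c₆ = 0 := by
  have hαF : α ∈ ℚ⟮α⟯ := mem_adjoin_simple_self ℚ α
  have hrest : c₃ * (-α + 2) + c₄ * (-2 * α ^ 2 + 1) + c₅ * (α ^ 2 + 2 * α + 2)
      + c₆ * (-α + 2) ∈ ℚ⟮α⟯ := by aesop
  have indep := @eq_zero_of_add_mul_add_mul_sq_eq_zero_of_pow_three_eq_two ℝ _ _ α hα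
  obtain ⟨q₀, hq₀⟩ := h 0
  obtain ⟨q₄, hq₄⟩ := h 4
  simp only [Fin.isValue, Matrix.cons_val] at hq₀ hq₄
  have hc₅ : c₅ = 0 := by
    by_contra hc₅
    have hq₀' : (2 * c₅) • β + (c₃ * (-α + 2) + c₄ * (-2 * α ^ 2 + 1)
        + c₅ * (α ^ 2 + 2 * α + 2) + c₆ * (-α + 2)) = q₀ := by
      rw [Rat.smul_def]
      push_cast
      linear_combination hq₀
    exact hβα (mem_of_smul_add_mem (mul_ne_zero two_ne_zero hc₅) hrest
      (hq₀' ▸ SubfieldClass.ratCast_mem _ q₀))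
  subst hc₅
  obtain ⟨-, h₃₆, hc₄⟩ := indep (a := 2 * c₃ + c₄ + 2 * c₆ - q₀) (b := -c₃ - c₆) (c := -2 * c₄)
    (by push_cast; linear_combination hq₀)
  obtain rfl : c₄ = 0 := by linarith
  obtain rfl : c₆ = -c₃ := by linarith
  have hden : 4 * α ^ 2 - 2 ≠ 0 := fun h0 =>
    four_ne_zero (indep (a := -2) (b := 0) (c := 4) (by push_cast; linear_combination h0)).2.2
  obtain ⟨-, hc₃, -⟩ := indep (a := 2 * q₄ - 8 * c₃) (b := 2 * c₃) (c := -4 * q₄) (by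
    have hq₄' : (c₃ : ℝ) * (2 * (α - 4)) / (4 * α ^ 2 - 2) = q₄ := by
      rw [← hq₄]
      push_cast
      ring
    rw [div_eq_iff hden] at hq₄'
    push_cast
    linear_combination hq₄')
  obtain rfl : c₃ = 0 := by linarith
  norm_num

/-- If a rational linear combination c₃u₃ + c₄u₄ + c₅u₅ + c₆u₆ of
the four kernel vectors has all rational coordinates, then all cᵢ are zero. -/
theorem rational_combination_trivial (α β : ℝ) (hα : α ^ 3 = 2)
    (hβ : β ^ 2 + α ^ 2 * β + (1 - α ^ 2) = 0)
    (hβα : β ∉ IntermediateField.adjoin ℚ ({α} : Set ℝ))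
    (c₃ c₄ c₅ c₆ : ℚ)
    (h : ∀ i : Fin 10, ∃ q : ℚ,
      (c₃ : ℝ) * (![-α + 2, 0, 0, 0, (α - 4)/(4*α^2 - 2), 0, 0, 0, 0, 1] i)
      + (c₄ : ℝ) * (![-2*α^2 + 1, 0, 0, 0, 1/2, 0, 0, 0, 1, 0] i)
      + (c₅ : ℝ) * (![α^2 + 2*α + 2*β + 2, 0, 0, 0,
            (α^2 - 4*α)/(4*α^2 - 2), 0, 1, 0, 0, 0] i)
      + (c₆ : ℝ) * (![-α + 2, 0, 0, 0, (-α + 4)/(4*α^2 - 2), 1, 0, 0, 0, 0] i)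
      = (q : ℝ)) :
    c₃ = 0 ∧ c₄ = 0 ∧ c₅ = 0 ∧ c₆ = 0 :=
  rational_combination_trivial_general α β hα hβα c₃ c₄ c₅ c₆ h
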